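/- arXiv:1810.03485 — 2 statements merged into one kernel-verified Lean document; each statement's English description precedes it below -/
import Mathlib

section
/- For any prime power q and any d ≥ 1, h_q(q^d − 1) = d − 1. -/
open Polynomial Module

/-- The cyclic shift operator on `Fin n → F`. -/
def cycShift (F : Type*) (n : ℕ) : (Fin n → F) → (Fin n → F) :=
  fun x i => x ⟨(i.1 + 1) % n, Nat.mod_lt _ (lt_of_le_of_lt (Nat.zero_le _) i.2)⟩

/-- A subspace `U ≤ F^n` is cyclically covering if the union of its cyclic shifts is `F^n`. -/
def IsCycCovering (F : Type*) [Field F] (n : ℕ) (U : Submodule F (Fin n → F)) : Prop :=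
  ∀ x : Fin n → F, ∃ r : ℕ, (cycShift F n)^[r] x ∈ U

/-- `hq F n` : the maximum codimension of a cyclically covering subspace of `F^n`. -/
noncomputable def hq (F : Type*) [Field F] [Fintype F] (n : ℕ) : ℕ :=
  sSup {k | ∃ U : Submodule F (Fin n → F), IsCycCovering F n U ∧
    Module.finrank F (Fin n → F) - Module.finrank F U = k}

/-!
If the `n` shifts of `U` cover `F^n`, counting gives `q^n ≤ n q^(dim U)`, i.e. `q^(codim U) ≤ n`;
for `n = q^d - 1 < q^d` the codimension is at most `d - 1`.

Conversely, let `E / F` be the extension of degree `d` and `g` a generator of the cyclic group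
`Eˣ`, of order `n = q^d - 1`. The surjection `x ↦ ∑ xᵢ gⁱ` from `F^n` onto `E` turns the cyclic
shift into multiplication by `g⁻¹`. Hence a vector whose image is `g^r ≠ 0` is moved by the `r`-th
shift into the preimage of `F ⊆ E`, a subspace of codimension `d - 1`.
-/

section CyclicShift

variable {F : Type*} {n : ℕ} [NeZero n]

lemma cycShift_apply (x : Fin n → F) (i : Fin n) : cycShift F n x i = x (i + 1) := by
  simp only [cycShift, Fin.add_def, Fin.val_one', Nat.add_mod_mod]

open Fin.NatCast in
lemma iterate_cycShift_apply (r : ℕ) (x : Fin n → F) (i : Fin n) :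
    (cycShift F n)^[r] x i = x (i + r) := by
  induction r generalizing i with
  | zero => simp
  | succ r ih =>
    rw [Function.iterate_succ_apply', cycShift_apply, ih, Nat.cast_succ, ← add_assoc,
      add_right_comm]

open Fin.NatCast in
lemma iterate_cycShift_mod (r : ℕ) (x : Fin n → F) :
    (cycShift F n)^[r % n] x = (cycShift F n)^[r] x := by
  funext i
  rw [iterate_cycShift_apply, iterate_cycShift_apply, CharP.cast_eq_mod (Fin n) n r]

lemma cycShift_injective : Function.Injective (cycShift F n) := fun x y h ↦
  funext fun i ↦ by simpa [cycShift_apply] using congrFun h (i - 1)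

end CyclicShift

section UpperBound

variable {F : Type*} [Field F] [Fintype F] {n : ℕ} [NeZero n] {U : Submodule F (Fin n → F)}

open Finset in
lemma card_le_mul_card_of_isCycCovering (hU : IsCycCovering F n U) :
    Fintype.card (Fin n → F) ≤ n * Nat.card U := by
  classical
  have hcover : (univ : Finset (Fin n → F)) ⊆ (range n).biUnion
      fun r ↦ {x | (cycShift F n)^[r] x ∈ U} := by
    intro x _
    obtain ⟨r, hr⟩ := hU x
    simp only [mem_biUnion, mem_range, mem_filter_univ]
    exact ⟨r % n, Nat.mod_lt _ (Nat.pos_of_neZero n), by rwa [iterate_cycShift_mod]⟩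
  have hpreimage (r : ℕ) : #{x | (cycShift F n)^[r] x ∈ U} = Nat.card U := by
    have hbij : Function.Bijective (cycShift F n)^[r] :=
      Finite.injective_iff_bijective.mp (cycShift_injective.iterate r)
    rw [← Fintype.card_subtype, ← Nat.card_eq_fintype_card]
    exact Nat.card_congr ((Equiv.ofBijective _ hbij).subtypeEquiv fun _ ↦ Iff.rfl)
  calc Fintype.card (Fin n → F) ≤ ∑ r ∈ range n, #{x | (cycShift F n)^[r] x ∈ U} :=
        (card_le_card hcover).trans card_biUnion_le
    _ = n * Nat.card U := by simp [hpreimage]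

lemma card_pow_codim_le_of_isCycCovering (hU : IsCycCovering F n U) :
    Fintype.card F ^ (finrank F (Fin n → F) - finrank F U) ≤ n := by
  have hle : finrank F U ≤ n := by simpa using U.finrank_le
  have hcard := card_le_mul_card_of_isCycCovering hU
  rw [Fintype.card_fun, Fintype.card_fin, natCard_eq_pow_finrank (K := F),
    Nat.card_eq_fintype_card] at hcard
  rw [finrank_fin_fun]
  refine Nat.le_of_mul_le_mul_right ?_ (pow_pos (Fintype.card_pos (α := F)) (finrank F U))
  rwa [← pow_add, Nat.sub_add_cancel hle]

end UpperBound

lemma finrank_sub_finrank_comap_of_surjective {K V W : Type*} [DivisionRing K] [AddCommGroup V]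
    [Module K V] [AddCommGroup W] [Module K W] [FiniteDimensional K V] {f : V →ₗ[K] W}
    (hf : Function.Surjective f) (p : Submodule K W) :
    finrank K V - finrank K (p.comap f) = finrank K W - finrank K p := by
  have : FiniteDimensional K W := Module.Finite.of_surjective f hf
  have hker : LinearMap.ker (p.mkQ ∘ₗ f) = p.comap f := by
    rw [LinearMap.ker_comp, Submodule.ker_mkQ]
  have hrange : LinearMap.range (p.mkQ ∘ₗ f) = ⊤ :=
    LinearMap.range_eq_top.mpr (p.mkQ_surjective.comp hf)
  have := LinearMap.finrank_range_add_finrank_ker (p.mkQ ∘ₗ f)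
  rw [hker, hrange, finrank_top] at this
  have := p.finrank_quotient_add_finrank
  omega

section PowersCombination

variable {F E : Type*} [CommSemiring F] [CommSemiring E] [Algebra F E] {g : E} {n : ℕ}

variable (F) in
/-- Identifying `F^n` with `F[X] ⧸ (X ^ n - 1)`, this is evaluation at `g`. -/
def linearCombinationPowers (g : E) (n : ℕ) : (Fin n → F) →ₗ[F] E :=
  Fintype.linearCombination F fun i : Fin n ↦ g ^ (i : ℕ)

lemma mul_linearCombinationPowers_cycShift [NeZero n] (hg : g ^ n = 1) (x : Fin n → F) :
    g * linearCombinationPowers F g n (cycShift F n x) = linearCombinationPowers F g n x := by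
  simp only [linearCombinationPowers, Fintype.linearCombination_apply, Finset.mul_sum,
    cycShift_apply, mul_smul_comm]
  refine Fintype.sum_equiv (Equiv.addRight 1) _ _ fun i ↦ ?_
  have hval : ((i + 1 : Fin n) : ℕ) = ((i : ℕ) + 1) % n := by
    rw [Fin.val_add, Fin.val_one', Nat.add_mod_mod]
  rw [Equiv.coe_addRight, ← pow_succ', hval, ← pow_eq_pow_mod _ hg]

lemma pow_mul_linearCombinationPowers_iterate_cycShift [NeZero n] (hg : g ^ n = 1) (r : ℕ)
    (x : Fin n → F) :
    g ^ r * linearCombinationPowers F g n ((cycShift F n)^[r] x) =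
      linearCombinationPowers F g n x := by
  induction r generalizing x with
  | zero => simp
  | succ r ih =>
    rw [Function.iterate_succ_apply', pow_succ, mul_assoc, mul_linearCombinationPowers_cycShift hg,
      ih]

lemma linearCombinationPowers_surjective [NeZero n] (hg : g ^ n = 1)
    (hgen : ∀ a : E, a ≠ 0 → ∃ k : ℕ, g ^ k = a) :
    Function.Surjective (linearCombinationPowers F g n) := by
  rw [← LinearMap.range_eq_top, linearCombinationPowers, Fintype.range_linearCombination,
    Submodule.eq_top_iff']
  intro a
  obtain rfl | ha := eq_or_ne a 0
  · exact Submodule.zero_mem _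
  obtain ⟨k, rfl⟩ := hgen a ha
  refine Submodule.subset_span ⟨⟨k % n, Nat.mod_lt _ (Nat.pos_of_neZero n)⟩, ?_⟩
  exact (pow_eq_pow_mod k hg).symm

end PowersCombination

lemma isCycCovering_comap_linearCombinationPowers {F E : Type*} [Field F] [Field E] [Algebra F E]
    {g : E} {n : ℕ} [NeZero n] (hg : g ^ n = 1)
    (hgen : ∀ a : E, a ≠ 0 → ∃ k : ℕ, g ^ k = a) :
    IsCycCovering F n ((Subalgebra.toSubmodule ⊥).comap (linearCombinationPowers F g n)) := by
  intro x
  obtain h0 | hne := eq_or_ne (linearCombinationPowers F g n x) 0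
  · exact ⟨0, by simp [h0]⟩
  obtain ⟨r, hr⟩ := hgen _ hne
  refine ⟨r, ?_⟩
  have hone : linearCombinationPowers F g n ((cycShift F n)^[r] x) = 1 := by
    have hg0 : g ^ r ≠ 0 := hr ▸ hne
    refine mul_left_cancel₀ hg0 ?_
    rw [pow_mul_linearCombinationPowers_iterate_cycShift hg, hr, mul_one]
  simp [hone]

lemma exists_isCycCovering_codim_eq (F E : Type*) [Field F] [Field E] [Algebra F E] [Finite E]
    {n : ℕ} (hn : Nat.card E = n + 1) :
    ∃ U : Submodule F (Fin n → F), IsCycCovering F n U ∧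
      finrank F (Fin n → F) - finrank F U = finrank F E - 1 := by
  have hunits : Nat.card Eˣ = n := by rw [Nat.card_units, hn, Nat.add_sub_cancel]
  have : NeZero n := ⟨hunits ▸ Nat.card_pos.ne'⟩
  obtain ⟨g, hg⟩ := IsCyclic.exists_monoid_generator (α := Eˣ)
  have hgn : (g : E) ^ n = 1 := by
    rw [← Units.val_pow_eq_pow_val, ← hunits, pow_card_eq_one', Units.val_one]
  have hgen (a : E) (ha : a ≠ 0) : ∃ k : ℕ, (g : E) ^ k = a := by
    obtain ⟨k, hk⟩ := hg (Units.mk0 a ha)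
    exact ⟨k, by simpa using congrArg Units.val hk⟩
  refine ⟨_, isCycCovering_comap_linearCombinationPowers hgn hgen, ?_⟩
  rw [finrank_sub_finrank_comap_of_surjective (linearCombinationPowers_surjective hgn hgen),
    Subalgebra.finrank_toSubmodule, Subalgebra.finrank_bot]

/-- For a prime power q and d ≥ 1, h_q(q^d − 1) = d − 1. -/
theorem stmt_4 (F : Type*) [Field F] [Fintype F] (d : ℕ) (hd : 0 < d) :
    hq F (Fintype.card F ^ d - 1) = d - 1 := by
  obtain ⟨p, _⟩ := CharP.exists F
  have : Fact p.Prime := ⟨CharP.char_is_prime F p⟩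
  have : NeZero d := ⟨hd.ne'⟩
  have hF : 1 < Fintype.card F := Fintype.one_lt_card
  have hpow : 1 < Fintype.card F ^ d := Nat.one_lt_pow hd.ne' hF
  have : NeZero (Fintype.card F ^ d - 1) := ⟨by omega⟩
  have hcard : Nat.card (FiniteField.Extension F p d) = Fintype.card F ^ d - 1 + 1 := by
    rw [FiniteField.natCard_extension, Nat.card_eq_fintype_card]
    omega
  obtain ⟨U, hU, hcodim⟩ := exists_isCycCovering_codim_eq F _ hcard
  rw [FiniteField.finrank_extension] at hcodim
  refine IsGreatest.csSup_eq ⟨⟨U, hU, hcodim⟩, ?_⟩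
  rintro _ ⟨V, hV, rfl⟩
  have hlt : Fintype.card F ^ (finrank F (Fin _ → F) - finrank F V) < Fintype.card F ^ d :=
    (card_pow_codim_le_of_isCycCovering hV).trans_lt (Nat.sub_lt (by omega) one_pos)
  have := (Nat.pow_lt_pow_iff_right hF).mp hlt
  omega
end

section
/- Let p be a prime, q a power of p, k a positive integer dividing q − 1, and d ≥ 0. Then h_q(k p^d) = 0; i.e., the only cyclically covering subspace of F_q^{k p^d} is F_q^{k p^d} itself. -/
open Polynomial Module

/-!
Let `U` be a proper subspace all of whose `σ`-orbits meet it, and let `W ≤ U` be the largest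
`σ`-invariant subspace of `U`. As `σ ^ n = 1` and `X ^ n - 1` splits over `F` (`Fˣ` contains a
primitive `k`-th root of unity, and `X ^ (k * p ^ d) - 1 = (X ^ k - 1) ^ (p ^ d)`), the map
induced by `σ` on the nonzero space `V ⧸ W` has an eigenvector `w + W`, with eigenvalue `ζ ≠ 0`.
Then `σ ^ r w ≡ ζ ^ r • w` modulo `W ⊆ U` for every `r`, so as soon as one `σ ^ r w` lies in `U`,
so does `w` and with it every `σ ^ s w`; that is, `w ∈ W`, a contradiction.
-/

section Eigen

variable {K V : Type*} [Field K] [AddCommGroup V] [Module K V] [FiniteDimensional K V]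

theorem Module.End.exists_hasEigenvalue_of_splits [Nontrivial V] {f : End K V} {p : K[X]}
    (hp : p ≠ 0) (hsplit : p.Splits) (hfp : aeval f p = 0) :
    ∃ μ, f.HasEigenvalue μ ∧ p.IsRoot μ := by
  have hdvd : minpoly K f ∣ p := minpoly.dvd K f hfp
  obtain ⟨μ, hμ⟩ := (hsplit.of_dvd hp hdvd).exists_eval_eq_zero
    (minpoly.degree_pos (Algebra.IsIntegral.isIntegral f)).ne'
  exact ⟨μ, hasEigenvalue_of_isRoot hμ, IsRoot.dvd hμ hdvd⟩

theorem Submodule.exists_notMem_forall_pow_apply_sub_smul_mem {T : End K V} {n : ℕ}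
    (hn : n ≠ 0) (hT : T ^ n = 1) (hsplit : (X ^ n - 1 : K[X]).Splits) {W : Submodule K V}
    (hWT : W ≤ W.comap T) (hW : W ≠ ⊤) :
    ∃ w ∉ W, ∃ ζ : K, ζ ≠ 0 ∧ ∀ r : ℕ, (T ^ r) w - ζ ^ r • w ∈ W := by
  have : Nontrivial (V ⧸ W) := Submodule.Quotient.nontrivial_iff.mpr hW
  have hT' : aeval (W.mapQ W T hWT) (X ^ n - 1 : K[X]) = 0 := by
    rw [map_sub, map_pow, aeval_X, map_one, ← Submodule.mapQ_pow, sub_eq_zero]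
    ext x
    simp [hT]
  have hX : (X ^ n - 1 : K[X]) ≠ 0 := X_pow_sub_C_ne_zero (Nat.pos_of_ne_zero hn) 1
  obtain ⟨ζ, hζ, hroot⟩ := End.exists_hasEigenvalue_of_splits hX hsplit hT'
  obtain ⟨w', hw⟩ := hζ.exists_hasEigenvector
  obtain ⟨w, rfl⟩ := W.mkQ_surjective w'
  refine ⟨w, fun h => hw.2 ((W.mkQ_apply w).trans ((Submodule.Quotient.mk_eq_zero W).mpr h)),
    ζ, ?_, fun r => ?_⟩
  · rintro rfl
    simp [hn] at hroot
  · have hpow := hw.pow_apply r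
    rw [← Submodule.mapQ_pow] at hpow
    exact (Submodule.Quotient.eq W).mp hpow

theorem Submodule.eq_top_of_forall_exists_pow_apply_mem {T : End K V} {n : ℕ} (hn : n ≠ 0)
    (hT : T ^ n = 1) (hsplit : (X ^ n - 1 : K[X]).Splits) (U : Submodule K V)
    (hU : ∀ x, ∃ r, (T ^ r) x ∈ U) : U = ⊤ := by
  by_contra hUtop
  set W := ⨅ r : ℕ, U.comap (T ^ r)
  have hWU : W ≤ U := fun x hx => by simpa using (mem_iInf _).mp hx 0
  have hWT : W ≤ W.comap T := fun x hx => by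
    simp only [W, mem_comap, mem_iInf] at hx ⊢
    intro r
    simpa [pow_succ, End.mul_apply] using hx (r + 1)
  obtain ⟨w, hwW, ζ, hζ, hdiff⟩ := exists_notMem_forall_pow_apply_sub_smul_mem hn hT hsplit hWT
    (ne_top_of_le_ne_top hUtop hWU)
  obtain ⟨r, hr⟩ := hU w
  have hwU : w ∈ U := by
    have : ζ ^ r • w ∈ U := by simpa using U.sub_mem hr (hWU (hdiff r))
    exact (U.smul_mem_iff (pow_ne_zero r hζ)).mp this
  refine hwW (mem_iInf _ |>.mpr fun s => ?_)
  simpa using U.add_mem (hWU (hdiff s)) (U.smul_mem (ζ ^ s) hwU)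

end Eigen

section CycShift

variable (R : Type*) (n : ℕ)

theorem cycShift_iterate_apply (r : ℕ) (x : Fin n → R) (i : Fin n) :
    (cycShift R n)^[r] x i = x ⟨(i.1 + r) % n, Nat.mod_lt _ i.pos⟩ := by
  induction r generalizing x with
  | zero => simp [Nat.mod_eq_of_lt i.2]
  | succ r ih =>
    rw [Function.iterate_succ_apply, ih]
    simp only [cycShift, Nat.mod_add_mod, Nat.add_assoc]

theorem cycShift_iterate_self : (cycShift R n)^[n] = id := by
  ext x i
  simp [cycShift_iterate_apply, Nat.mod_eq_of_lt i.2]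

variable [Semiring R]

def cycShiftₗ : End R (Fin n → R) where
  toFun := cycShift R n
  map_add' _ _ := rfl
  map_smul' _ _ := rfl

theorem cycShiftₗ_pow_apply (r : ℕ) (x : Fin n → R) :
    (cycShiftₗ R n ^ r) x = (cycShift R n)^[r] x :=
  End.pow_apply _ r x

theorem cycShiftₗ_pow_self : cycShiftₗ R n ^ n = 1 :=
  LinearMap.ext fun x => by rw [cycShiftₗ_pow_apply, cycShift_iterate_self]; rfl

end CycShift

theorem FiniteField.splits_X_pow_sub_one_of_dvd {F : Type*} [Field F] [Fintype F] {k : ℕ}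
    (hkdvd : k ∣ Fintype.card F - 1) : (X ^ k - 1 : F[X]).Splits := by
  obtain ⟨g, hg⟩ := IsCyclic.exists_ofOrder_eq_natCard (α := Fˣ)
  rw [Nat.card_units, Nat.card_eq_fintype_card] at hg
  have hprim : IsPrimitiveRoot (g : F) (Fintype.card F - 1) :=
    IsPrimitiveRoot.coe_units_iff.mpr (hg ▸ IsPrimitiveRoot.orderOf g)
  obtain ⟨m, hm⟩ := hkdvd
  have hm0 : m ≠ 0 := by
    rintro rfl
    have := Fintype.one_lt_card (α := F)
    omega
  have hζ : IsPrimitiveRoot ((g : F) ^ m) k := by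
    simpa [hm, Nat.mul_div_cancel _ (Nat.pos_of_ne_zero hm0)] using
      hprim.pow_of_dvd hm0 (hm ▸ dvd_mul_left m k)
  simpa using X_pow_sub_one_splits hζ

theorem splits_X_pow_mul_char_pow_sub_one {F : Type*} [Field F] (p : ℕ) [Fact p.Prime]
    [CharP F p] {k : ℕ} (hk : (X ^ k - 1 : F[X]).Splits) (d : ℕ) :
    (X ^ (k * p ^ d) - 1 : F[X]).Splits := by
  rw [pow_mul, ← one_pow (p ^ d), ← sub_pow_char_pow]
  exact hk.pow _

theorem hq_eq_zero_of_forall_isCycCovering (F : Type*) [Field F] [Fintype F] (n : ℕ)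
    (h : ∀ U, IsCycCovering F n U → U = ⊤) : hq F n = 0 := by
  have hcodim : {m | ∃ U : Submodule F (Fin n → F), IsCycCovering F n U ∧
      finrank F (Fin n → F) - finrank F U = m} = {0} := by
    ext m
    constructor
    · rintro ⟨U, hU, rfl⟩
      rw [Set.mem_singleton_iff, h U hU, finrank_top, Nat.sub_self]
    · rintro rfl
      exact ⟨⊤, fun _ => ⟨0, trivial⟩, by rw [finrank_top, Nat.sub_self]⟩
  rw [hq, hcodim, csSup_singleton]

/-- For q a power of the prime p and k ∣ q − 1, h_q(k·p^d) = 0. -/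
theorem stmt_18 (p : ℕ) (hp : p.Prime) (F : Type*) [Field F] [Fintype F] [CharP F p]
    (k d : ℕ) (hk : 0 < k) (hkdvd : k ∣ Fintype.card F - 1) :
    hq F (k * p ^ d) = 0 := by
  have : Fact p.Prime := ⟨hp⟩
  have hsplit : (X ^ (k * p ^ d) - 1 : F[X]).Splits :=
    splits_X_pow_mul_char_pow_sub_one p (FiniteField.splits_X_pow_sub_one_of_dvd hkdvd) d
  refine hq_eq_zero_of_forall_isCycCovering F _ fun U hU => ?_
  have hn : k * p ^ d ≠ 0 := (Nat.mul_pos hk (pow_pos hp.pos d)).ne'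
  refine U.eq_top_of_forall_exists_pow_apply_mem hn (cycShiftₗ_pow_self F _) hsplit fun x => ?_
  simpa only [cycShiftₗ_pow_apply] using hU x
end
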